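/- arXiv:0912.0348 — 2 statements merged into one kernel-verified Lean document; each statement's English description precedes it below -/
import Mathlib

section
/- For 0 < q < 1 and real u, if x = -u/(2 log q) then as q → 1⁻ the series 1 - 2·∑_{k=0}^{∞} (-1)^k q^{2·binom(k,2)} q^{2kx} converges to (1 - e^u)/(1 + e^u). -/
open Filter Real

/-- For `u > 0`, setting `x = -u/(2 log q)`, the magnetization series
`1 - 2·∑_{k≥0} (-1)^k q^{k(k-1)} q^{2kx}` converges, as `q → 1⁻`,
to `(1 - e^u)/(1 + e^u)`. -/
theorem stmt2 (u : ℝ) (hu : 0 < u) :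
    Tendsto (fun q : ℝ =>
        1 - 2 * ∑' k : ℕ, (-1 : ℝ) ^ k * q ^ (k * (k - 1)) *
          q ^ (2 * (k : ℝ) * (-u / (2 * Real.log q))))
      (nhdsWithin 1 (Set.Ioo 0 1))
      (nhds ((1 - Real.exp u) / (1 + Real.exp u))) := by
  set r : ℝ := Real.exp (-u) with hrdef
  have hr0 : 0 < r := Real.exp_pos _
  have hr1 : r < 1 := by
    rw [hrdef, Real.exp_lt_one_iff]; linarith
  -- the key convergence of the simplified series
  have key : Tendsto (fun q : ℝ => ∑' k : ℕ, (-1 : ℝ) ^ k * q ^ (k * (k - 1)) * r ^ k)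
      (nhdsWithin 1 (Set.Ioo 0 1))
      (nhds (∑' k : ℕ, (-1 : ℝ) ^ k * (1:ℝ) ^ (k * (k - 1)) * r ^ k)) := by
    apply tendsto_tsum_of_dominated_convergence (bound := fun k : ℕ => r ^ k)
    · exact summable_geometric_of_lt_one hr0.le hr1
    · intro k
      have hc : Continuous fun q : ℝ => (-1 : ℝ) ^ k * q ^ (k * (k - 1)) * r ^ k := by
        continuity
      exact (hc.tendsto 1).mono_left nhdsWithin_le_nhds
    · filter_upwards [self_mem_nhdsWithin] with q hq k
      rw [norm_mul, norm_mul, norm_pow, norm_pow, norm_neg, norm_one, one_pow, one_mul,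
        Real.norm_eq_abs, Real.norm_eq_abs, abs_of_pos (pow_pos hr0 k)]
      have h1 : |q| ^ (k * (k - 1)) ≤ 1 :=
        pow_le_one₀ (abs_nonneg q) (by rw [abs_of_pos hq.1]; exact hq.2.le)
      exact mul_le_of_le_one_left (pow_nonneg hr0.le k) h1
  -- identify the limit value of the series
  have hsum : (∑' k : ℕ, (-1 : ℝ) ^ k * (1:ℝ) ^ (k * (k - 1)) * r ^ k) = (1 + r)⁻¹ := by
    have h : ∀ k : ℕ, (-1 : ℝ) ^ k * (1:ℝ) ^ (k * (k - 1)) * r ^ k = (-r) ^ k := by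
      intro k; rw [one_pow, mul_one]; exact (neg_pow r k).symm
    rw [tsum_congr h, tsum_geometric_of_norm_lt_one (by rwa [norm_neg, Real.norm_eq_abs,
      abs_of_pos hr0]), sub_neg_eq_add]
  rw [hsum] at key
  -- the final limit after affine transformation
  have final : Tendsto (fun q : ℝ => 1 - 2 * ∑' k : ℕ, (-1 : ℝ) ^ k * q ^ (k * (k - 1)) * r ^ k)
      (nhdsWithin 1 (Set.Ioo 0 1)) (nhds ((1 - Real.exp u) / (1 + Real.exp u))) := by
    have hE : (0:ℝ) < Real.exp u := Real.exp_pos u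
    have hval : (1:ℝ) - 2 * (1 + r)⁻¹ = (1 - Real.exp u) / (1 + Real.exp u) := by
      rw [hrdef, Real.exp_neg]
      field_simp
      ring
    rw [← hval]
    exact (key.const_mul 2).const_sub 1
  -- the original function agrees with the simplified one on Ioo 0 1
  refine final.congr' ?_
  filter_upwards [self_mem_nhdsWithin] with q hq
  congr 1
  congr 1
  refine tsum_congr fun k => ?_
  have hlq : Real.log q ≠ 0 := (Real.log_neg hq.1 hq.2).ne
  rw [Real.rpow_def_of_pos hq.1, hrdef, ← Real.exp_nat_mul]
  congr 1
  field_simp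
end

section
/- For 0 < q < 1 and integers p ≥ 1, l with 1 ≤ l ≤ p and δ ≥ 0 in the admissible range of the finite chain: the finite-chain probability P(l,δ) = q^{2lδ} [p+δ-l choose δ]_{q²} [p-δ+l-1 choose l-1]_{q²} / [2p choose p]_{q²} converges as p → ∞ to q^{2lδ} (q²;q²)_∞ / ((q²;q²)_{l-1} (q²;q²)_δ). -/
open Finset Filter

/-- Gaussian binomial coefficient `[n choose k]` in the variable `q²`. -/
noncomputable def qBinom (q : ℝ) (n k : ℕ) : ℝ :=
  ∏ i ∈ Finset.range k, (1 - q ^ (2 * (n - k + i + 1))) / (1 - q ^ (2 * (i + 1)))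

section aux

variable {q : ℝ} (hq0 : 0 < q) (hq1 : q < 1)

lemma aux_pos (hq0 : 0 < q) (hq1 : q < 1) (k : ℕ) : 0 < 1 - q ^ (2 * (k + 1)) := by
  have : q ^ (2 * (k + 1)) < 1 := pow_lt_one₀ hq0.le hq1 (by omega)
  linarith

lemma aux_summable_log (hq0 : 0 < q) (hq1 : q < 1) :
    Summable fun k : ℕ => Real.log (1 - q ^ (2 * (k + 1))) := by
  have hq2 : q ^ 2 < 1 := pow_lt_one₀ hq0.le hq1 (by omega)
  have hq2pos : 0 < 1 - q ^ 2 := by linarith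
  have hsump : Summable fun k : ℕ => q ^ (2 * (k + 1)) * (1 - q ^ 2)⁻¹ := by
    have : Summable fun k : ℕ => (q ^ 2) ^ (k + 1) :=
      ((summable_geometric_of_lt_one (sq_nonneg q) hq2).mul_left (q ^ 2)).congr
        (fun k => by ring)
    exact (this.congr fun k => by rw [← pow_mul]).mul_right _
  have key : Summable fun k : ℕ => -Real.log (1 - q ^ (2 * (k + 1))) := by
    refine Summable.of_nonneg_of_le (fun k => ?_) (fun k => ?_) hsump
    · have hx : q ^ (2 * (k + 1)) ≤ 1 := le_of_lt (pow_lt_one₀ hq0.le hq1 (by omega))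
      have hx0 : 0 ≤ q ^ (2 * (k + 1)) := by positivity
      have : Real.log (1 - q ^ (2 * (k + 1))) ≤ 0 :=
        Real.log_nonpos (le_of_lt (aux_pos hq0 hq1 k)) (by linarith)
      linarith
    · set x := q ^ (2 * (k + 1)) with hxdef
      have hx0 : 0 < x := pow_pos hq0 _
      have hxq2 : x ≤ q ^ 2 := pow_le_pow_of_le_one hq0.le hq1.le (by omega)
      have h1x : 0 < 1 - x := aux_pos hq0 hq1 k
      have hlog : Real.log (1 - x)⁻¹ ≤ (1 - x)⁻¹ - 1 :=
        Real.log_le_sub_one_of_pos (inv_pos.mpr h1x)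
      rw [Real.log_inv] at hlog
      have h2 : (1 - x)⁻¹ - 1 = x * (1 - x)⁻¹ := by
        field_simp
        ring
      have h3 : x * (1 - x)⁻¹ ≤ x * (1 - q ^ 2)⁻¹ := by
        apply mul_le_mul_of_nonneg_left _ hx0.le
        exact inv_anti₀ hq2pos (by linarith)
      linarith
  simpa using key.neg

lemma aux_hasProd (hq0 : 0 < q) (hq1 : q < 1) :
    HasProd (fun k : ℕ => 1 - q ^ (2 * (k + 1))) (∏' k : ℕ, (1 - q ^ (2 * (k + 1)))) := by
  have := (Real.multipliable_of_summable_log (f := fun k : ℕ => 1 - q ^ (2 * (k + 1)))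
    (fun k => aux_pos hq0 hq1 k) (aux_summable_log hq0 hq1)).hasProd
  exact this

lemma aux_tprod_pos (hq0 : 0 < q) (hq1 : q < 1) :
    0 < ∏' k : ℕ, (1 - q ^ (2 * (k + 1))) := by
  have := Real.rexp_tsum_eq_tprod (f := fun k : ℕ => 1 - q ^ (2 * (k + 1)))
    (fun k => aux_pos hq0 hq1 k) (aux_summable_log hq0 hq1)
  rw [← this]
  exact Real.exp_pos _

end aux

/-- For fixed `l ≥ 1` and `δ`, the finite-chain probability
`P(l,δ) = q^{2lδ} [p+δ-l choose δ]_{q²} [p-δ+l-1 choose l-1]_{q²} / [2p choose p]_{q²}`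
converges as `p → ∞` to `q^{2lδ} (q²;q²)_∞ / ((q²;q²)_{l-1} (q²;q²)_δ)`. -/
theorem stmt12 (q : ℝ) (hq0 : 0 < q) (hq1 : q < 1) (l δ : ℕ) (hl : 1 ≤ l) :
    Tendsto (fun p : ℕ =>
        q ^ (2 * l * δ) * qBinom q (p + δ - l) δ * qBinom q (p - δ + l - 1) (l - 1) /
          qBinom q (2 * p) p) atTop
      (nhds (q ^ (2 * l * δ) * (∏' k : ℕ, (1 - q ^ (2 * (k + 1)))) /
        ((∏ k ∈ Finset.range (l - 1), (1 - q ^ (2 * (k + 1)))) *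
          ∏ k ∈ Finset.range δ, (1 - q ^ (2 * (k + 1)))))) := by
  set f : ℕ → ℝ := fun k => 1 - q ^ (2 * (k + 1)) with hf
  set L : ℝ := ∏' k : ℕ, f k with hL
  have hfpos : ∀ k, 0 < f k := aux_pos hq0 hq1
  have hLpos : 0 < L := aux_tprod_pos hq0 hq1
  set D : ℕ → ℝ := fun p => ∏ k ∈ Finset.range p, f k with hD
  have hDpos : ∀ p, 0 < D p := fun p => Finset.prod_pos fun k _ => hfpos k
  have hDtend : Tendsto D atTop (nhds L) := (aux_hasProd hq0 hq1).tendsto_prod_nat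
  -- limit of numerator factors tending to 1
  have hone : ∀ c : ℕ, Tendsto (fun p : ℕ => 1 - q ^ (2 * (p - c + 1))) atTop (nhds 1) := by
    intro c
    have h0 : Tendsto (fun p : ℕ => q ^ (2 * (p - c + 1))) atTop (nhds 0) := by
      refine (tendsto_pow_atTop_nhds_zero_of_lt_one hq0.le hq1).comp ?_
      refine tendsto_atTop_mono (fun p => ?_) (tendsto_sub_atTop_nat c)
      omega
    simpa using (tendsto_const_nhds (x := (1 : ℝ))).sub h0
  -- qBinom q (2p) p = D (2p) / D p / D p
  have hqb2 : ∀ p : ℕ, qBinom q (2 * p) p = D (2 * p) / D p / D p := by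
    intro p
    have : qBinom q (2 * p) p = (∏ i ∈ Finset.range p, f (p + i)) / D p := by
      rw [qBinom, hD, ← Finset.prod_div_distrib]
      refine Finset.prod_congr rfl fun i _ => ?_
      have : 2 * p - p + i + 1 = p + i + 1 := by omega
      rw [this]
    rw [this]
    have h2p : D (2 * p) = D p * ∏ i ∈ Finset.range p, f (p + i) := by
      simp only [hD]
      rw [two_mul]
      exact Finset.prod_range_add f p p
    have hDp : D p ≠ 0 := (hDpos p).ne'
    rw [h2p]
    field_simp
  have hCtend : Tendsto (fun p => qBinom q (2 * p) p) atTop (nhds (L / L / L)) := by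
    have h2 : Tendsto (fun p : ℕ => D (2 * p)) atTop (nhds L) :=
      hDtend.comp (tendsto_atTop_mono (fun p => by simp only [id_eq]; omega) tendsto_id)
    simpa only [hqb2, Pi.div_def] using (h2.div hDtend hLpos.ne').div hDtend hLpos.ne'
  -- first factor
  have hAtend : Tendsto (fun p => qBinom q (p + δ - l) δ) atTop (nhds (1 / D δ)) := by
    have key : Tendsto (fun p : ℕ => (∏ i ∈ Finset.range δ,
        (1 - q ^ (2 * (p - l + i + 1)))) / D δ) atTop (nhds (1 / D δ)) := by
      have hnum : Tendsto (fun p : ℕ => ∏ i ∈ Finset.range δ,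
          (1 - q ^ (2 * (p - l + i + 1)))) atTop (nhds (∏ _i ∈ Finset.range δ, (1:ℝ))) := by
        refine tendsto_finset_prod _ fun i _ => ?_
        have := hone (l - i)  -- want exponent p - l + i + 1; rewrite
        -- direct: q ^ (2 * (p - l + i + 1)) → 0
        have h0 : Tendsto (fun p : ℕ => q ^ (2 * (p - l + i + 1))) atTop (nhds 0) := by
          refine (tendsto_pow_atTop_nhds_zero_of_lt_one hq0.le hq1).comp ?_
          refine tendsto_atTop_mono (fun p => ?_) (tendsto_sub_atTop_nat l)
          omega
        simpa using (tendsto_const_nhds (x := (1 : ℝ))).sub h0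
      rw [Finset.prod_const_one] at hnum
      exact hnum.div_const _
    refine key.congr' ?_
    filter_upwards [eventually_ge_atTop l] with p hp
    rw [qBinom, hD, ← Finset.prod_div_distrib]
    refine (Finset.prod_congr rfl fun i _ => ?_).symm
    have : p + δ - l - δ + i + 1 = p - l + i + 1 := by omega
    rw [this]
  -- second factor
  have hBtend : Tendsto (fun p => qBinom q (p - δ + l - 1) (l - 1)) atTop
      (nhds (1 / D (l - 1))) := by
    have key : Tendsto (fun p : ℕ => (∏ i ∈ Finset.range (l - 1),
        (1 - q ^ (2 * (p - δ + i + 1)))) / D (l - 1)) atTop (nhds (1 / D (l - 1))) := by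
      have hnum : Tendsto (fun p : ℕ => ∏ i ∈ Finset.range (l - 1),
          (1 - q ^ (2 * (p - δ + i + 1)))) atTop (nhds (∏ _i ∈ Finset.range (l - 1), (1:ℝ))) := by
        refine tendsto_finset_prod _ fun i _ => ?_
        have h0 : Tendsto (fun p : ℕ => q ^ (2 * (p - δ + i + 1))) atTop (nhds 0) := by
          refine (tendsto_pow_atTop_nhds_zero_of_lt_one hq0.le hq1).comp ?_
          refine tendsto_atTop_mono (fun p => ?_) (tendsto_sub_atTop_nat δ)
          omega
        simpa using (tendsto_const_nhds (x := (1 : ℝ))).sub h0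
      rw [Finset.prod_const_one] at hnum
      exact hnum.div_const _
    refine key.congr' ?_
    filter_upwards [eventually_ge_atTop δ] with p hp
    rw [qBinom, hD, ← Finset.prod_div_distrib]
    refine (Finset.prod_congr rfl fun i _ => ?_).symm
    have : p - δ + l - 1 - (l - 1) + i + 1 = p - δ + i + 1 := by omega
    rw [this]
  have hmain := (((tendsto_const_nhds (x := (q : ℝ) ^ (2 * l * δ))).mul hAtend).mul hBtend).div
    hCtend (by positivity)
  simp only [Pi.div_def] at hmain
  convert hmain using 2
  rw [hL, hD]
  have h1 : (0:ℝ) < ∏ k ∈ Finset.range (l-1), f k := hDpos _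
  have h2 : (0:ℝ) < ∏ k ∈ Finset.range δ, f k := hDpos _
  field_simp
end
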